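/- A clustering system 𝒞 on a finite set X is closed if and only if there exists an lca-network N on X with 𝒞_N = 𝒞. -/

import Mathlib

/-!
If `N` is an lca-network and `C(u) ∩ C(v) ≠ ∅`, let `w` be the unique lca of `C(u) ∩ C(v)`.
Below every common ancestor of that set lies a minimal one, which must be `w`; so `w` lies below
`u` and `v`, and `C(w) = C(u) ∩ C(v)`.

Conversely, the Hasse diagram of a closed clustering system `(𝒞, ⊆)` is a network whose cluster
map is the identity. For nonempty `A`, a minimal cluster containing `A` is the least one, because
its intersection with any other cluster containing `A` is again such a cluster; so it is the unique
lca of `A`.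
-/

namespace PhyloNet

/-- A (rooted) network on a set `X` of taxa: a finite directed acyclic graph with a
unique vertex of indegree 0 (the root), whose vertices of outdegree 0 (the leaves)
are exactly the elements of `X` (via the injection `leafEmb`). -/
structure Network (X : Type) where
  V : Type
  [fintypeV : Fintype V]
  E : V → V → Prop
  leafEmb : X → V
  leafEmb_inj : Function.Injective leafEmb
  acyclic : ∀ u v : V, E u v → ¬ Relation.ReflTransGen E v u
  root_unique : ∃! r : V, ∀ u : V, ¬ E u r
  leaf_iff : ∀ v : V, (∀ w : V, ¬ E v w) ↔ ∃ x : X, leafEmb x = v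

attribute [instance] Network.fintypeV

variable {X : Type}

namespace Network

/-- `reach u v` : there is a directed path (possibly trivial) from `u` to `v`,
i.e. `v ⪯ u`. -/
def reach (N : Network X) : N.V → N.V → Prop := Relation.ReflTransGen N.E

/-- The cluster of a vertex: the set of leaves reachable from it. -/
def cluster (N : Network X) (v : N.V) : Set X := {x | N.reach v (N.leafEmb x)}

/-- The clustering system of a network. -/
def CS (N : Network X) : Set (Set X) := Set.range N.cluster

noncomputable def inDeg (N : Network X) (v : N.V) : ℕ := {u | N.E u v}.ncard
noncomputable def outDeg (N : Network X) (v : N.V) : ℕ := {w | N.E v w}.ncard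

def IsHybrid (N : Network X) (v : N.V) : Prop := 1 < N.inDeg v
def IsTreeVertex (N : Network X) (v : N.V) : Prop := N.inDeg v ≤ 1
def IsLeaf (N : Network X) (v : N.V) : Prop := ∀ w : N.V, ¬ N.E v w

/-- The arc `(u,w)` is a shortcut: `w ≺ v` for some child `v ≠ w` of `u`. -/
def IsShortcut (N : Network X) (u w : N.V) : Prop :=
  N.E u w ∧ ∃ v : N.V, N.E u v ∧ v ≠ w ∧ N.reach v w

def ShortcutFree (N : Network X) : Prop := ∀ u w : N.V, ¬ N.IsShortcut u w

/-- Path-cluster comparability. -/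
def PCC (N : Network X) : Prop :=
  ∀ u v : N.V, (N.reach u v ∨ N.reach v u) ↔
    (N.cluster u ⊆ N.cluster v ∨ N.cluster v ⊆ N.cluster u)

def SemiRegular (N : Network X) : Prop := N.ShortcutFree ∧ N.PCC

/-- `N` is regular iff `v ↦ C(v)` is a digraph isomorphism onto the Hasse diagram
of `𝒞_N` (ordered by inclusion). -/
def Regular (N : Network X) : Prop :=
  Function.Injective N.cluster ∧
  ∀ u v : N.V, N.E u v ↔
    (N.cluster v ⊂ N.cluster u ∧
      ¬ ∃ w : N.V, N.cluster v ⊂ N.cluster w ∧ N.cluster w ⊂ N.cluster u)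

def Separated (N : Network X) : Prop := ∀ v : N.V, N.IsHybrid v → N.outDeg v = 1

def Phylogenetic (N : Network X) : Prop := ¬ ∃ v : N.V, N.outDeg v = 1 ∧ N.inDeg v ≤ 1

def Binary (N : Network X) : Prop :=
  (∀ v : N.V, N.IsTreeVertex v → (N.IsLeaf v ∨ N.outDeg v = 2)) ∧
  (∀ v : N.V, N.IsHybrid v → N.inDeg v = 2 ∧ N.outDeg v = 1)

def TreeChild (N : Network X) : Prop :=
  ∀ v : N.V, ¬ N.IsLeaf v → ∃ u : N.V, N.E v u ∧ N.inDeg u = 1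

/-- The underlying undirected (simple) graph of a network. -/
def UG (N : Network X) : SimpleGraph N.V where
  Adj u v := u ≠ v ∧ (N.E u v ∨ N.E v u)
  symm := ⟨fun _ _ h => ⟨Ne.symm h.1, Or.symm h.2⟩⟩
  loopless := ⟨fun _ h => h.1 rfl⟩

/-- A set of vertices is biconnected if it induces a connected undirected graph
with no cutvertex. -/
def IsBiconn (N : Network X) (B : Set N.V) : Prop :=
  (N.UG.induce B).Connected ∧ ∀ v ∈ B, (N.UG.induce (B \ {v})).Preconnected

/-- A block: a maximal biconnected set of vertices. -/
def IsBlock (N : Network X) (B : Set N.V) : Prop :=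
  N.IsBiconn B ∧ ∀ B' : Set N.V, B ⊆ B' → N.IsBiconn B' → B' = B

/-- The set `B` contains an undirected cycle (`B` is a non-trivial block when it is
a block). -/
def HasCycleIn (N : Network X) (B : Set N.V) : Prop :=
  ∃ (v : N.V) (c : N.UG.Walk v v), c.IsCycle ∧ ∀ w ∈ c.support, w ∈ B

/-- Level-1: each block contains at most one hybrid vertex that is not
`⪯`-maximal in the block. -/
def Level1 (N : Network X) : Prop :=
  ∀ B : Set N.V, N.IsBlock B →
    Set.Subsingleton {v : N.V | v ∈ B ∧ N.IsHybrid v ∧ ∃ u ∈ B, u ≠ v ∧ N.reach u v}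

/-- The set `B` (with the edges of the underlying undirected graph between its
members) is exactly an undirected cycle. -/
def IsCycleSet (N : Network X) (B : Set N.V) : Prop :=
  ∃ (v : N.V) (c : N.UG.Walk v v), c.IsCycle ∧ (∀ w : N.V, w ∈ c.support ↔ w ∈ B) ∧
    ∀ u w : N.V, (N.UG.Adj u w ∧ u ∈ B ∧ w ∈ B) ↔ s(u, w) ∈ c.edges

/-- A galled tree: every non-trivial block is an undirected cycle. -/
def GalledTree (N : Network X) : Prop :=
  ∀ B : Set N.V, N.IsBlock B → N.HasCycleIn B → N.IsCycleSet B

/-- Quasi-binary: hybrid vertices have indegree 2 and outdegree 1, and the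
`⪯`-maximal vertex of every non-trivial block has outdegree 2. -/
def QuasiBinary (N : Network X) : Prop :=
  (∀ v : N.V, N.IsHybrid v → N.inDeg v = 2 ∧ N.outDeg v = 1) ∧
  ∀ B : Set N.V, N.IsBlock B → N.HasCycleIn B →
    ∀ v ∈ B, (∀ u ∈ B, N.reach u v → u = v) → N.outDeg v = 2

/-- `LCA A`: the `⪯`-minimal vertices among the common ancestors of `A`. -/
def LCA (N : Network X) (A : Set X) : Set N.V :=
  {v : N.V | A ⊆ N.cluster v ∧ ∀ u : N.V, A ⊆ N.cluster u → N.reach v u → u = v}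

/-- An lca-network: every nonempty set of leaves has a unique least common
ancestor. -/
def LcaNetwork (N : Network X) : Prop :=
  ∀ A : Set X, A.Nonempty → ∃ v : N.V, N.LCA A = {v}

/-- A strong lca-network. -/
def StrongLca (N : Network X) : Prop :=
  N.LcaNetwork ∧
  ∀ A : Set X, A.Nonempty → ∃ x ∈ A, ∃ y ∈ A, N.LCA ({x, y} : Set X) = N.LCA A

/-- Cluster networks in the sense of Huson & Rupp. -/
def ClusterNetwork (N : Network X) : Prop :=
  N.PCC ∧
  (∀ u v : N.V, N.cluster u = N.cluster v ↔
    (u = v ∨ (N.IsHybrid v ∧ N.E v u) ∨ (N.IsHybrid u ∧ N.E u v))) ∧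
  (∀ u v : N.V, N.E v u →
    ¬ ∃ w : N.V, N.cluster u ⊂ N.cluster w ∧ N.cluster w ⊂ N.cluster v) ∧
  (∀ v : N.V, N.IsHybrid v →
    ∃ u : N.V, N.E v u ∧ (∀ w : N.V, N.E v w → w = u) ∧ N.IsTreeVertex u)

/-- The multiplicity of a cluster in the cluster multiset `𝓜_N`. -/
noncomputable def multiplicity (N : Network X) (C : Set X) : ℕ :=
  Nat.card {v : N.V // N.cluster v = C}

/-- Isomorphism of networks on the same leaf set `X`, fixing every leaf. -/
def Isomorphic (N N' : Network X) : Prop :=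
  ∃ φ : N.V ≃ N'.V, (∀ u v : N.V, N.E u v ↔ N'.E (φ u) (φ v)) ∧
    ∀ x : X, φ (N.leafEmb x) = N'.leafEmb x

end Network

/-- A clustering system on `X`. -/
def IsClusteringSystem {X : Type} (𝒞 : Set (Set X)) : Prop :=
  ∅ ∉ 𝒞 ∧ Set.univ ∈ 𝒞 ∧ ∀ x : X, {x} ∈ 𝒞

/-- Two sets overlap if `A ∩ B ∉ {∅, A, B}`. -/
def Overlap {X : Type} (A B : Set X) : Prop :=
  (A ∩ B).Nonempty ∧ A ∩ B ≠ A ∧ A ∩ B ≠ B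

/-- Closed (under pairwise nonempty intersections). -/
def IsClosedCS {X : Type} (𝒞 : Set (Set X)) : Prop :=
  ∀ A ∈ 𝒞, ∀ B ∈ 𝒞, (A ∩ B).Nonempty → A ∩ B ∈ 𝒞

/-- Property (L). -/
def PropertyL {X : Type} (𝒞 : Set (Set X)) : Prop :=
  ∀ C₁ ∈ 𝒞, ∀ C₂ ∈ 𝒞, ∀ C₃ ∈ 𝒞, Overlap C₁ C₂ → Overlap C₁ C₃ → C₁ ∩ C₂ = C₁ ∩ C₃

/-- Weak hierarchy. -/
def WeakHierarchy {X : Type} (𝒞 : Set (Set X)) : Prop :=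
  ∀ C₁ ∈ 𝒞, ∀ C₂ ∈ 𝒞, ∀ C₃ ∈ 𝒞,
    C₁ ∩ C₂ ∩ C₃ = C₁ ∩ C₂ ∨ C₁ ∩ C₂ ∩ C₃ = C₁ ∩ C₃ ∨
    C₁ ∩ C₂ ∩ C₃ = C₂ ∩ C₃ ∨ C₁ ∩ C₂ ∩ C₃ = ∅

/-- Property (N3O): no three distinct pairwise overlapping clusters. -/
def N3O {X : Type} (𝒞 : Set (Set X)) : Prop :=
  ¬ ∃ C₁ ∈ 𝒞, ∃ C₂ ∈ 𝒞, ∃ C₃ ∈ 𝒞,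
    C₁ ≠ C₂ ∧ C₁ ≠ C₃ ∧ C₂ ≠ C₃ ∧ Overlap C₁ C₂ ∧ Overlap C₁ C₃ ∧ Overlap C₂ C₃

/-- Property (2-Inc). -/
def TwoInc {X : Type} (𝒞 : Set (Set X)) : Prop :=
  ∀ C ∈ 𝒞,
    {A : Set X | A ∈ 𝒞 ∧ A ⊂ C ∧ ∀ B ∈ 𝒞, B ⊂ C → A ⊆ B → A = B}.ncard ≤ 2 ∧
    {A : Set X | A ∈ 𝒞 ∧ C ⊂ A ∧ ∀ B ∈ 𝒞, C ⊂ B → B ⊆ A → A = B}.ncard ≤ 2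

/-- The intersection closure: all nonempty intersections of nonempty subfamilies. -/
def interClosure {X : Type} (𝒞 : Set (Set X)) : Set (Set X) :=
  {A : Set X | A.Nonempty ∧ ∃ S : Set (Set X), S ⊆ 𝒞 ∧ S.Nonempty ∧ A = ⋂₀ S}

namespace Network

lemma reach_antisymm (N : Network X) {u v : N.V} (huv : N.reach u v) (hvu : N.reach v u) :
    u = v := by
  rcases Relation.ReflTransGen.cases_head huv with h | ⟨w, huw, hwv⟩
  · exact h
  · exact (N.acyclic u w huw (hwv.trans hvu)).elim

lemma cluster_subset_of_reach (N : Network X) {u v : N.V} (h : N.reach u v) :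
    N.cluster v ⊆ N.cluster u :=
  fun _ hx => h.trans hx

lemma exists_reach_minimal (N : Network X) (P : N.V → Prop) {u : N.V} (hu : P u) :
    ∃ w, N.reach u w ∧ P w ∧ ∀ z, P z → N.reach w z → z = w := by
  let below : N.V → N.V → Prop := fun a b => N.reach b a ∧ a ≠ b
  have : IsTrans N.V below := ⟨fun a b c ⟨hba, hab⟩ ⟨hcb, _⟩ =>
    ⟨hcb.trans hba, fun hac => hab (N.reach_antisymm (hac ▸ hcb) hba)⟩⟩
  have : Std.Irrefl below := ⟨fun a h => h.2 rfl⟩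
  obtain ⟨w, ⟨huw, hw⟩, hmin⟩ := (Finite.wellFounded_of_trans_of_irrefl below).has_min
    {w | N.reach u w ∧ P w} ⟨u, .refl, hu⟩
  exact ⟨w, huw, hw, fun z hz hwz => by_contra fun hzw => hmin z ⟨huw.trans hwz, hz⟩ ⟨hwz, hzw⟩⟩

lemma reach_of_LCA_eq_singleton (N : Network X) {A : Set X} {w z : N.V}
    (hw : N.LCA A = {w}) (hz : A ⊆ N.cluster z) : N.reach z w := by
  obtain ⟨m, hzm, hm, hmin⟩ := N.exists_reach_minimal (fun y => A ⊆ N.cluster y) hz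
  have : m ∈ N.LCA A := ⟨hm, hmin⟩
  rw [hw, Set.mem_singleton_iff] at this
  exact this ▸ hzm

lemma LcaNetwork.isClosedCS {N : Network X} (hN : N.LcaNetwork) : IsClosedCS N.CS := by
  rintro _ ⟨u, rfl⟩ _ ⟨v, rfl⟩ hne
  obtain ⟨w, hw⟩ := hN _ hne
  have hA : N.cluster u ∩ N.cluster v ⊆ N.cluster w := (hw.symm ▸ rfl : w ∈ N.LCA _).1
  have hwu := N.cluster_subset_of_reach (N.reach_of_LCA_eq_singleton hw Set.inter_subset_left)
  have hwv := N.cluster_subset_of_reach (N.reach_of_LCA_eq_singleton hw Set.inter_subset_right)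
  exact ⟨w, (Set.subset_inter hwu hwv).antisymm hA⟩

end Network

lemma IsClosedCS.exists_isLeast [Finite X] {𝒞 : Set (Set X)} (h𝒞 : IsClosedCS 𝒞)
    (huniv : Set.univ ∈ 𝒞) {A : Set X} (hA : A.Nonempty) :
    ∃ D, IsLeast {C | C ∈ 𝒞 ∧ A ⊆ C} D := by
  obtain ⟨D, ⟨hD, hAD⟩, hmin⟩ := Set.Finite.exists_minimal (Set.toFinite {C | C ∈ 𝒞 ∧ A ⊆ C})
    ⟨Set.univ, huniv, Set.subset_univ A⟩
  refine ⟨D, ⟨hD, hAD⟩, fun C ⟨hC, hAC⟩ => ?_⟩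
  have hADC : A ⊆ D ∩ C := Set.subset_inter hAD hAC
  exact (hmin ⟨h𝒞 D hD C hC (hA.mono hADC), hADC⟩ Set.inter_subset_left).trans
    Set.inter_subset_right

lemma reflTransGen_swap_covBy_iff {α : Type*} [PartialOrder α] [Finite α] {a b : α} :
    Relation.ReflTransGen (fun a b : α => b ⋖ a) a b ↔ b ≤ a := by
  classical
  have : Fintype α := Fintype.ofFinite α
  have : LocallyFiniteOrder α := Fintype.toLocallyFiniteOrder
  rw [le_iff_reflTransGen_covBy]
  exact Relation.reflTransGen_swap

namespace IsClusteringSystem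

variable {𝒞 : Set (Set X)}

lemma eq_univ_of_forall_not_covBy [Finite X] (h𝒞 : IsClusteringSystem 𝒞) {u : 𝒞}
    (hu : ∀ w : 𝒞, ¬ u ⋖ w) : (u : Set X) = Set.univ := by
  by_contra hne
  obtain ⟨w, huw, -⟩ := exists_covBy_le_of_lt
    (show u < ⟨Set.univ, h𝒞.2.1⟩ from Set.ssubset_univ_iff.mpr hne)
  exact hu w huw

lemma forall_not_covBy_iff [Finite X] (h𝒞 : IsClusteringSystem 𝒞) {v : 𝒞} :
    (∀ w : 𝒞, ¬ w ⋖ v) ↔ ∃ x, (v : Set X) = {x} := by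
  constructor
  · intro hv
    obtain ⟨x, hx⟩ := Set.nonempty_iff_ne_empty.mpr fun h => h𝒞.1 (h ▸ v.2)
    refine ⟨x, by_contra fun hne => ?_⟩
    have hxv : ({x} : Set X) < v := lt_of_le_of_ne (Set.singleton_subset_iff.mpr hx) (Ne.symm hne)
    obtain ⟨w, -, hwv⟩ := exists_le_covBy_of_lt (show (⟨{x}, h𝒞.2.2 x⟩ : 𝒞) < v from hxv)
    exact hv w hwv
  · rintro ⟨x, hx⟩ w hwv
    have hw : (w : Set X) ⊂ {x} := hx ▸ hwv.lt
    rcases Set.subset_singleton_iff_eq.mp hw.subset with h | h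
    · exact h𝒞.1 (h ▸ w.2)
    · exact hw.ne h

end IsClusteringSystem

noncomputable def hasseNetwork [Finite X] (𝒞 : Set (Set X)) (h𝒞 : IsClusteringSystem 𝒞) :
    Network X where
  V := 𝒞
  fintypeV := Fintype.ofFinite 𝒞
  E u v := v ⋖ u
  leafEmb x := ⟨{x}, h𝒞.2.2 x⟩
  leafEmb_inj a b h := Set.singleton_eq_singleton_iff.mp (congrArg Subtype.val h)
  acyclic u v hvu huv := hvu.lt.not_ge (reflTransGen_swap_covBy_iff.mp huv)
  root_unique := ⟨⟨Set.univ, h𝒞.2.1⟩, fun w h => h.lt.not_ge (Set.subset_univ _),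
    fun r hr => Subtype.ext (h𝒞.eq_univ_of_forall_not_covBy hr)⟩
  leaf_iff v := h𝒞.forall_not_covBy_iff.trans <| exists_congr fun x => by
    rw [Subtype.ext_iff, eq_comm]

namespace hasseNetwork

variable [Finite X] {𝒞 : Set (Set X)} (h𝒞 : IsClusteringSystem 𝒞)

lemma reach_iff {u v : 𝒞} : (hasseNetwork 𝒞 h𝒞).reach u v ↔ v ≤ u :=
  reflTransGen_swap_covBy_iff (α := 𝒞)

lemma cluster_eq (v : 𝒞) : (hasseNetwork 𝒞 h𝒞).cluster v = v := by
  ext x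
  exact (reach_iff h𝒞).trans Set.singleton_subset_iff

lemma CS_eq : (hasseNetwork 𝒞 h𝒞).CS = 𝒞 := by
  ext C
  refine ⟨?_, fun hC => ⟨⟨C, hC⟩, cluster_eq h𝒞 _⟩⟩
  rintro ⟨v, rfl⟩
  exact (cluster_eq h𝒞 v).symm ▸ v.2

lemma lcaNetwork_of_isClosedCS (hcl : IsClosedCS 𝒞) : (hasseNetwork 𝒞 h𝒞).LcaNetwork := by
  intro A hA
  obtain ⟨D, ⟨hD, hAD⟩, hleast⟩ := hcl.exists_isLeast h𝒞.2.1 hA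
  refine ⟨⟨D, hD⟩, Set.eq_singleton_iff_unique_mem.mpr ⟨?_, ?_⟩⟩
  · refine ⟨(cluster_eq h𝒞 _).symm ▸ hAD, fun (u : 𝒞) hAu hDu => ?_⟩
    rw [cluster_eq] at hAu
    exact ((reach_iff h𝒞).mp hDu).antisymm (hleast ⟨u.2, hAu⟩)
  · rintro (w : 𝒞) ⟨hAw, hmin⟩
    rw [cluster_eq] at hAw
    exact (hmin ⟨D, hD⟩ ((cluster_eq h𝒞 _).symm ▸ hAD)
      ((reach_iff h𝒞).mpr (hleast ⟨w.2, hAw⟩))).symm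

end hasseNetwork

/-- A clustering system is closed iff it is the clustering system of
some lca-network. -/
theorem closed_iff_exists_lcaNetwork (X : Type) [Fintype X] (𝒞 : Set (Set X))
    (h𝒞 : IsClusteringSystem 𝒞) :
    IsClosedCS 𝒞 ↔ ∃ N : Network X, N.LcaNetwork ∧ N.CS = 𝒞 := by
  constructor
  · intro hcl
    exact ⟨hasseNetwork 𝒞 h𝒞, hasseNetwork.lcaNetwork_of_isClosedCS h𝒞 hcl, hasseNetwork.CS_eq h𝒞⟩
  · rintro ⟨N, hN, rfl⟩
    exact hN.isClosedCS

end PhyloNet
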